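/- The multiplicative semigroup of monomials in the generators s, t of R₂ is nil of degree exactly 5: every monomial w satisfies w⁵ = 0, and the monomial tst²s satisfies (tst²s)⁴ ≠ 0. -/

import Mathlib

/-!
The tree-indexed vector space `V` over `ℚ` with basis the free monoid on two letters
(encoded as `List Bool`, with `false` the letter `0` and `true` the letter `1`).
The recursive matrices `s = [[0,0],[1,0]]` and `t = [[0,t],[0,s]]` of the ring `R₂`
act on the decomposition `V = ℚ·φ ⊕ 0V ⊕ 1V` by the block-matrix recursion.
-/

noncomputable section

abbrev V : Type := List Bool →₀ ℚ

/-- Prefixing by a letter: the embedding `V → yV`. -/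
def pre (b : Bool) : V →ₗ[ℚ] V := Finsupp.lmapDomain ℚ ℚ (List.cons b)

/-- Value of `s = [[0,0],[1,0]]` on a basis word. -/
def Sfun : List Bool → V
  | [] => 0
  | false :: u => Finsupp.single (true :: u) 1
  | true :: _ => 0

/-- Value of `t = [[0,t],[0,s]]` on a basis word, by recursion. -/
def Tfun : List Bool → V
  | [] => 0
  | false :: _ => 0
  | true :: u => pre false (Tfun u) + pre true (Sfun u)

/-- The generator `s` of `R₂`. -/
def sR : Module.End ℚ V := Finsupp.linearCombination ℚ Sfun

/-- The generator `t` of `R₂`. -/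
def tR : Module.End ℚ V := Finsupp.linearCombination ℚ Tfun

/-- The level-preserving operator with block form `[[e,0,0],[0,A,B],[0,C,D]]` on
`V = ℚ·φ ⊕ 0V ⊕ 1V`, written `e ⊕ [[A,B],[C,D]]`. -/
def blk (e : ℚ) (A B C D : Module.End ℚ V) : Module.End ℚ V :=
  Finsupp.linearCombination ℚ (fun w => match w with
    | [] => Finsupp.single ([] : List Bool) e
    | false :: u => pre false (A (Finsupp.single u 1)) + pre true (C (Finsupp.single u 1))
    | true :: u => pre false (B (Finsupp.single u 1)) + pre true (D (Finsupp.single u 1)))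

/-- The monomial in `s, t` given by a word (`false ↦ s`, `true ↦ t`). -/
def mono (w : List Bool) : Module.End ℚ V :=
  (w.map (fun b => if b then tR else sR)).prod

/-- The ring `R₂` generated by `s` and `t` (a non-unital subring of `End ℚ V`). -/
def R2 : NonUnitalSubring (Module.End ℚ V) := NonUnitalSubring.closure {sR, tR}

end

/-!
Encode `s`, `t` by `false`, `true`. Monomials map basis words of `V` to basis words or to `0`,
and the block forms of `s` and `t` show that a monomial `w` sends `b :: u` to `c :: u'`, where
`u'` is the image of `u` under the single monomial `entry c w`: every `t` of `w` contributes `t`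
or `s` according as the letter it outputs is `0` or `1`, and every `s` contributes nothing.

Products `x Q (y Q)⁴` with `|x| ≤ 2` and `1 ≤ |y| ≤ 2`, among them `w⁵ = l Q (l Q)⁴` for
`w = l :: Q`, vanish by induction on the length of the basis word: under `entry` such a product
becomes either a word containing `s² = 0` or `t³ = 0`, or a product of the same shape, with
`x' = entry c (x l)` and `y' = entry q (y l)`. As `entry` keeps one letter for each `t`,
`|x'|, |y'| ≤ 2` unless `x l` or `y l` is `t³`, and `y' ≠ []` unless `y l` contains `s²`.
-/

theorem List.replicate_infix_of_count_eq_length {α : Type*} [BEq α] [LawfulBEq α] {a : α}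
    {w : List α} {n : ℕ} (h : w.count a = w.length) (hn : n ≤ w.length) :
    List.replicate n a <:+: w := by
  rw [List.eq_replicate_of_mem fun b hb => (List.count_eq_length.mp h b hb).symm]
  exact List.infix_replicate_iff.mpr ⟨by simpa using hn, by simp⟩

namespace BasisAction

def act : Bool → List Bool → Option (List Bool)
  | false, false :: u => some (true :: u)
  | true, true :: false :: u => some (true :: true :: u)
  | true, true :: true :: u => (act true (true :: u)).map (List.cons false)
  | _, _ => none

def run : List Bool → List Bool → Option (List Bool)
  | [], u => some u
  | a :: w, u => (run w u).bind (act a)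

theorem run_append (p q u : List Bool) : run (p ++ q) u = (run q u).bind (run p) := by
  induction p with
  | nil => simp [run]
  | cons a p ih => simp [run, ih, Option.bind_assoc]

theorem run_nil_of_ne_nil : ∀ {w : List Bool}, w ≠ [] → run w [] = none
  | [a], _ => by cases a <;> rfl
  | a :: b :: w, _ => by rw [run, run_nil_of_ne_nil (List.cons_ne_nil b w)]; rfl

theorem act_false_eq_some {x r : List Bool} (h : act false x = some r) :
    ∃ u, x = false :: u ∧ r = true :: u := by
  match x, h with
  | false :: u, h => exact ⟨u, rfl, (Option.some_inj.mp h).symm⟩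

theorem act_true_eq_some {x r : List Bool} (h : act true x = some r) :
    ∃ u c v, x = true :: u ∧ r = c :: v ∧ act (!c) u = some v := by
  match x, h with
  | true :: false :: u, h =>
    exact ⟨false :: u, true, true :: u, rfl, (Option.some_inj.mp h).symm, rfl⟩
  | true :: true :: u, h =>
    obtain ⟨v, hv, rfl⟩ := Option.map_eq_some_iff.mp h
    exact ⟨true :: u, false, v, rfl, rfl, hv⟩

theorem run_false_false (u : List Bool) : run [false, false] u = none := by
  rcases u with _ | ⟨_ | _, u⟩ <;> simp [run, act]

theorem run_true_true_true (u : List Bool) : run [true, true, true] u = none := by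
  rcases u with _ | ⟨_ | _, _ | ⟨_ | _, u⟩⟩ <;> simp [run, act]
  cases act true (true :: u) <;> simp [act]

theorem run_eq_none_of_infix {k w : List Bool} (hk : ∀ v, run k v = none) (h : k <:+: w)
    (u : List Bool) : run w u = none := by
  obtain ⟨p, q, rfl⟩ := h
  simp [run_append, hk]

def HasZeroFactor (w : List Bool) : Prop := [false, false] <:+: w ∨ [true, true, true] <:+: w

instance : DecidablePred HasZeroFactor := fun _ => instDecidableOr

theorem HasZeroFactor.mono {w w' : List Bool} (h : HasZeroFactor w) (hw : w <:+: w') :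
    HasZeroFactor w' :=
  h.imp (·.trans hw) (·.trans hw)

theorem run_eq_none_of_hasZeroFactor {w : List Bool} (h : HasZeroFactor w) (u : List Bool) :
    run w u = none :=
  h.elim (run_eq_none_of_infix run_false_false · u) (run_eq_none_of_infix run_true_true_true · u)

def entry : Bool → List Bool → List Bool
  | _, [] => []
  | c, a :: w => (if a then [!c] else []) ++ entry a w

theorem entry_append (c : Bool) (p q : List Bool) :
    entry c (p ++ q) = entry c p ++ entry (p.getLastD c) q := by
  induction p generalizing c with
  | nil => rfl
  | cons a p ih => simp only [List.cons_append, entry, ih, List.getLastD_cons, List.append_assoc]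

theorem length_entry (c : Bool) (w : List Bool) : (entry c w).length = w.count true := by
  induction w generalizing c with
  | nil => rfl
  | cons a w ih => cases a <;> simp [entry, ih]

theorem run_cons_eq_some {w u r : List Bool} {b : Bool} (h : run w (b :: u) = some r) :
    ∃ c v, r = c :: v ∧ run (entry c w) u = some v := by
  induction w generalizing r with
  | nil => exact ⟨b, u, (Option.some_inj.mp h).symm, rfl⟩
  | cons a w ih =>
    obtain ⟨r₁, h₁, ha⟩ := Option.bind_eq_some_iff.mp h
    obtain ⟨c₁, v₁, rfl, hv₁⟩ := ih h₁
    cases a with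
    | false =>
      obtain ⟨_, ⟨rfl, rfl⟩, rfl⟩ := act_false_eq_some ha
      exact ⟨true, v₁, rfl, hv₁⟩
    | true =>
      obtain ⟨_, c, v, ⟨rfl, rfl⟩, rfl, hv⟩ := act_true_eq_some ha
      exact ⟨c, v, rfl, by simp [entry, run, hv₁, hv]⟩

theorem entry_ne_nil {w : List Bool} (hw : 2 ≤ w.length) (h : ¬HasZeroFactor w) (c : Bool) :
    entry c w ≠ [] := by
  intro he
  have hcount : w.count false = w.length := by
    have := List.count_false_add_count_true w
    rw [← length_entry c, he, List.length_nil] at this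
    omega
  exact h (Or.inl (List.replicate_infix_of_count_eq_length hcount hw))

theorem length_entry_le_two {w : List Bool} (hw : w.length ≤ 3) (h : ¬HasZeroFactor w)
    (c : Bool) : (entry c w).length ≤ 2 := by
  rw [length_entry]
  by_contra! hc
  have hcount : w.count true = w.length := by
    have := List.count_le_length (a := true) (l := w)
    omega
  exact h (Or.inr (List.replicate_infix_of_count_eq_length (n := 3) hcount (by omega)))

def block (Q x y : List Bool) : List Bool :=
  x ++ Q ++ (y ++ Q) ++ (y ++ Q) ++ (y ++ Q) ++ (y ++ Q)

theorem entry_block (c l : Bool) (Q x y : List Bool) :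
    entry c (block (l :: Q) x y) =
      block (entry l Q) (entry c (x ++ [l])) (entry (Q.getLastD l) (y ++ [l])) := by
  simp [block, entry, entry_append]

theorem hasZeroFactor_block_cons {l : Bool} {Q x y : List Bool}
    (h : HasZeroFactor (x ++ [l]) ∨ HasZeroFactor (y ++ [l])) :
    HasZeroFactor (block (l :: Q) x y) := by
  rcases h with h | h
  · exact h.mono ⟨[], Q ++ (y ++ l :: Q) ++ (y ++ l :: Q) ++ (y ++ l :: Q) ++ (y ++ l :: Q),
      by simp [block]⟩
  · exact h.mono ⟨x ++ l :: Q, Q ++ (y ++ l :: Q) ++ (y ++ l :: Q) ++ (y ++ l :: Q),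
      by simp [block]⟩

theorem hasZeroFactor_block_nil {y : List Bool} (hy : y ≠ []) (hy₂ : y.length ≤ 2)
    (x : List Bool) (c : Bool) :
    HasZeroFactor (block [] x y) ∨ HasZeroFactor (entry c (block [] x y)) := by
  -- `y⁴` contains `s²` or `t³` unless `y` is `st` or `ts`; then `entry d y⁴` contains `t³`
  have key : HasZeroFactor (y ++ y ++ y ++ y) ∨
      ∀ d, HasZeroFactor (entry d (y ++ y ++ y ++ y)) := by
    match y, hy, hy₂ with
    | [a], _, _ => cases a <;> decide
    | [a, b], _, _ => cases a <;> cases b <;> decide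
  have hb : block [] x y = x ++ (y ++ y ++ y ++ y) := by simp [block]
  rw [hb, entry_append]
  exact key.imp (·.mono (List.suffix_append _ _).isInfix)
    fun h => (h _).mono (List.suffix_append _ _).isInfix

theorem run_block_eq_none (u : List Bool) : ∀ {Q x y : List Bool}, x.length ≤ 2 → y ≠ [] →
    y.length ≤ 2 → run (block Q x y) u = none := by
  induction u with
  | nil => intro Q x y _ hy _; exact run_nil_of_ne_nil (by simp [block, hy])
  | cons b u ih =>
    intro Q x y hx hy hy₂
    refine Option.eq_none_iff_forall_ne_some.mpr fun r hr => ?_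
    obtain ⟨c, v, -, hv⟩ := run_cons_eq_some hr
    rcases Q with _ | ⟨l, Q⟩
    · rcases hasZeroFactor_block_nil hy hy₂ x c with h | h
      · simp [run_eq_none_of_hasZeroFactor h] at hr
      · simp [run_eq_none_of_hasZeroFactor h] at hv
    · by_cases h : HasZeroFactor (x ++ [l]) ∨ HasZeroFactor (y ++ [l])
      · simp [run_eq_none_of_hasZeroFactor (hasZeroFactor_block_cons h)] at hr
      · rw [not_or] at h
        have hy₁ := List.length_pos_iff.mpr hy
        rw [entry_block, ih (length_entry_le_two (by simp; omega) h.1 c)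
          (entry_ne_nil (by simp; omega) h.2 _) (length_entry_le_two (by simp; omega) h.2 _)] at hv
        simp at hv

theorem pre_single (b : Bool) (u : List Bool) :
    pre b (Finsupp.single u 1) = Finsupp.single (b :: u) 1 := by
  simp [pre, Finsupp.mapDomain_single]

theorem Sfun_eq_act (u : List Bool) : Sfun u = (act false u).elim 0 (Finsupp.single · 1) := by
  rcases u with _ | ⟨_ | _, u⟩ <;> rfl

theorem Tfun_eq_act (u : List Bool) : Tfun u = (act true u).elim 0 (Finsupp.single · 1) := by
  induction u with
  | nil => rfl
  | cons a u ih =>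
    cases a
    · rfl
    rcases u with _ | ⟨_ | _, v⟩
    · simp [Tfun, Sfun, act]
    · simp [Tfun, Sfun, act, pre_single]
    · rw [Tfun, ih, act]
      cases act true (true :: v) <;> simp [Sfun, pre_single]

theorem generator_single (a : Bool) (u : List Bool) :
    (if a then tR else sR) (Finsupp.single u 1) = (act a u).elim 0 (Finsupp.single · 1) := by
  cases a
  · simp [sR, Sfun_eq_act]
  · simp [tR, Tfun_eq_act]

theorem mono_single (w u : List Bool) :
    mono w (Finsupp.single u 1) = (run w u).elim 0 (Finsupp.single · 1) := by
  induction w with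
  | nil => rfl
  | cons a w ih =>
    rw [mono, List.map_cons, List.prod_cons, Module.End.mul_apply, ← mono, ih, run]
    cases run w u <;> simp [generator_single]

theorem mono_eq_zero_iff (w : List Bool) : mono w = 0 ↔ ∀ u, run w u = none := by
  refine ⟨fun h u => ?_, fun h => ?_⟩
  · have hu := mono_single w u
    rw [h, LinearMap.zero_apply] at hu
    cases hrun : run w u with
    | none => rfl
    | some v => simp [hrun, eq_comm] at hu
  · exact Finsupp.lhom_ext' fun u => LinearMap.ext_ring (by simp [mono_single, h u])

theorem mono_pow (w : List Bool) (n : ℕ) : mono w ^ n = mono (List.replicate n w).flatten := by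
  simp [mono]

end BasisAction

open BasisAction

/-- The multiplicative semigroup of monomials in `s, t` is nil of degree exactly `5`:
every monomial `w` satisfies `w⁵ = 0`, while `(tst²s)⁴ ≠ 0`. -/
theorem nil_degree_five :
    (∀ w : List Bool, w ≠ [] → (mono w) ^ 5 = 0) ∧
    (mono [true, false, true, true, false]) ^ 4 ≠ 0 := by
  refine ⟨fun w hw => ?_, fun h => ?_⟩
  · obtain ⟨l, Q, rfl⟩ := List.exists_cons_of_ne_nil hw
    refine (mono_pow _ 5).trans ((mono_eq_zero_iff _).mpr fun u => ?_)
    simpa [block] using run_block_eq_none u (Q := Q) (x := [l]) (y := [l])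
      (by simp) (by simp) (by simp)
  · rw [mono_pow, mono_eq_zero_iff] at h
    exact absurd (h [false, false, false, true, false, false, false]) (by decide)
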